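/- Let m, n be finite index types, let A : Matrix m n ℂ, let P : Matrix n n ℂ and Q : Matrix m m ℂ be positive semidefinite, and suppose Q·A = A·P. Then √Q·A = A·√P, where √P and √Q denote the positive semidefinite square roots of P and Q. -/

import Mathlib

open Matrix ComplexOrder

/-- The positive semidefinite square root of a positive semidefinite matrix, with the
definition `Matrix.PosSemidef.sqrt` had in the older Mathlib (removed since). -/
noncomputable def Matrix.PosSemidef.sqrt {n : Type*} [Fintype n] [DecidableEq n]
    {A : Matrix n n ℂ} (hA : A.PosSemidef) : Matrix n n ℂ :=
  hA.1.eigenvectorUnitary.1 * diagonal ((↑) ∘ (√·) ∘ hA.1.eigenvalues) *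
    (star hA.1.eigenvectorUnitary : Matrix n n ℂ)

/-! Spectra of Hermitian matrices are finite, so on the union of the spectra of `P` and `Q` any
function, in particular `√·`, agrees with one interpolating polynomial `p`. Hence `√P = p(P)`
and `√Q = p(Q)`, and `Q * A = A * P` passes to powers and then to polynomials. -/

open Polynomial

theorem Polynomial.exists_eqOn_of_finite {F : Type*} [Field F] {s : Set F} (hs : s.Finite)
    (f : F → F) : ∃ p : F[X], s.EqOn (fun x => p.eval x) f := by
  classical
  exact ⟨Lagrange.interpolate hs.toFinset id f, fun x hx =>
    Lagrange.eval_interpolate_at_node f (Set.injOn_id _) (hs.mem_toFinset.mpr hx)⟩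

namespace Matrix

variable {m n R S : Type*} [Fintype m] [Fintype n] [DecidableEq m] [DecidableEq n]

theorem pow_mul_of_mul_eq [Semiring S] {A : Matrix m n S} {P : Matrix n n S}
    {Q : Matrix m m S} (h : Q * A = A * P) (k : ℕ) : Q ^ k * A = A * P ^ k := by
  induction k with
  | zero => simp
  | succ k ih =>
    rw [pow_succ', Matrix.mul_assoc, ih, ← Matrix.mul_assoc, h, Matrix.mul_assoc, ← pow_succ']

theorem aeval_mul_of_mul_eq [CommSemiring R] [Semiring S] [Algebra R S] {A : Matrix m n S}
    {P : Matrix n n S} {Q : Matrix m m S} (h : Q * A = A * P) (p : R[X]) :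
    aeval Q p * A = A * aeval P p := by
  induction p using Polynomial.induction_on' with
  | add p q hp hq => rw [map_add, map_add, Matrix.add_mul, Matrix.mul_add, hp, hq]
  | monomial k a =>
    simp only [aeval_monomial, Algebra.algebraMap_eq_smul_one, smul_one_mul, Matrix.smul_mul,
      Matrix.mul_smul, pow_mul_of_mul_eq h]

theorem IsHermitian.cfc_mul_of_mul_eq {𝕜 : Type*} [RCLike 𝕜] {A : Matrix m n 𝕜}
    {P : Matrix n n 𝕜} {Q : Matrix m m 𝕜} (hQ : Q.IsHermitian) (hP : P.IsHermitian)
    (h : Q * A = A * P) (f : ℝ → ℝ) : cfc f Q * A = A * cfc f P := by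
  obtain ⟨p, hp⟩ :=
    Polynomial.exists_eqOn_of_finite (Q.finite_real_spectrum.union P.finite_real_spectrum) f
  have hQp : cfc f Q = aeval Q p := by
    rw [← cfc_polynomial p Q hQ.isSelfAdjoint]
    exact cfc_congr (hp.mono Set.subset_union_left).symm
  have hPp : cfc f P = aeval P p := by
    rw [← cfc_polynomial p P hP.isSelfAdjoint]
    exact cfc_congr (hp.mono Set.subset_union_right).symm
  rw [hQp, hPp]
  exact aeval_mul_of_mul_eq h p

theorem PosSemidef.sqrt_eq_cfc {P : Matrix n n ℂ} (hP : P.PosSemidef) :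
    hP.sqrt = cfc Real.sqrt P := by
  rw [hP.isHermitian.cfc_eq]
  rfl

end Matrix

/-- **Intertwining of positive semidefinite square roots of matrices**
(the matrix form of the lemma used in Proposition 1.5 of the paper).
If `P`, `Q` are positive semidefinite and `Q * A = A * P`, then `√Q * A = A * √P`. -/
theorem sqrt_intertwine_matrix {m n : Type*} [Fintype m] [Fintype n]
    [DecidableEq m] [DecidableEq n]
    (A : Matrix m n ℂ) (P : Matrix n n ℂ) (Q : Matrix m m ℂ)
    (hP : P.PosSemidef) (hQ : Q.PosSemidef) (h : Q * A = A * P) :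
    hQ.sqrt * A = A * hP.sqrt := by
  rw [hP.sqrt_eq_cfc, hQ.sqrt_eq_cfc]
  exact hQ.isHermitian.cfc_mul_of_mul_eq hP.isHermitian h Real.sqrt
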